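/- Let f, g_j (j = 1,…,m), h_i (i = 1,…,l), G_k, H_k (k = 1,…,s) : ℝⁿ → ℝ be continuously differentiable, and for β > 0 consider the regularized problem NLP(β): minimize f(w) subject to g_j(w) ≤ 0, h_i(w) = 0, G_k(w) ≥ 0, H_k(w) ≥ 0, and B_k(w,β) := φ(G_k(w) - β, H_k(w) - β) ≤ 0. Let {β_t} be a sequence of positive numbers with β_t → 0, and for each t let w^{β_t} be a KKT point of NLP(β_t) with associated multiplier vector (ξ^{β_t}, u^{β_t}); assume (w^{β_t}, ξ^{β_t}, u^{β_t}) → (w*, ξ*, u*) as t → ∞. If MPCC-LICQ holds at w*, then w* is an M-stationary point of the MPCC, i.e., there exist multipliers λ ∈ ℝᵐ, ξ ∈ ℝˡ, η, ζ ∈ ℝˢ with ∇f(w*) + Σ_j λ_j∇g_j(w*) + Σ_i ξ_i∇h_i(w*) − Σ_k η_k∇G_k(w*) − Σ_k ζ_k∇H_k(w*) = 0, λ_j ≥ 0 and λ_j·g_j(w*) = 0 for all j, η_k = 0 for k ∈ I₊₀(w*), ζ_k = 0 for k ∈ I₀₊(w*), and for every k ∈ I₀₀(w*) either (η_k > 0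 and ζ_k > 0) or η_k·ζ_k = 0. -/

import Mathlib

/-!
Writing φ(p, q) = p q − min(p + q, 0)² / 2 shows that φ is C¹ with
∇φ(p, q) = (max(q, −p), max(p, −q)). Hence the KKT condition of NLP(β) is the MPCC stationarity
equation with multipliers η = μ − ρ ∂₁φ(G − β, H − β) and ζ = ν − ρ ∂₂φ(G − β, H − β), and these
converge along with everything else. Where H_k(w*) = 0 (and G_k(w*) ≥ 0) the partial
∂₁φ(G_k(w*), H_k(w*)) vanishes, so the limit η_k equals μ*_k, which is nonnegative and vanishes
when G_k(w*) > 0 by complementarity; symmetrically for ζ. On the biactive set both limit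
multipliers are therefore nonnegative, which is M-stationarity.
-/

open Filter Topology Finset

/-- The Kanzow–Schwartz regularization function. -/
noncomputable def phi (p q : ℝ) : ℝ :=
  if 0 ≤ p + q then p * q else -(p ^ 2 + q ^ 2) / 2

lemma phi_eq_mul_sub (p q : ℝ) : phi p q = p * q - min (p + q) 0 ^ 2 / 2 := by
  unfold phi
  split_ifs with h
  · simp [min_eq_right h]
  · rw [min_eq_left (by linarith)]; ring

lemma continuous_phi : Continuous fun x : ℝ × ℝ => phi x.1 x.2 := by
  simp only [phi_eq_mul_sub]; fun_prop

lemma sq_min_zero_remainder_le (x y : ℝ) :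
    |min y 0 ^ 2 / 2 - min x 0 ^ 2 / 2 - (y - x) * min x 0| ≤ (y - x) ^ 2 := by
  rw [abs_le]
  rcases le_total x 0 with hx | hx <;> rcases le_total y 0 with hy | hy <;>
    simp only [min_eq_left, min_eq_right, hx, hy] <;> constructor <;> nlinarith

lemma hasDerivAt_sq_min_zero (x : ℝ) :
    HasDerivAt (fun y => min y 0 ^ 2 / 2) (min x 0) x := by
  rw [hasDerivAt_iff_isLittleO]
  have hsq : (fun y => (y - x) ^ 2) =o[𝓝 x] fun y => y - x :=
    (Asymptotics.isLittleO_pow_id one_lt_two).comp_tendsto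
      (tendsto_sub_nhds_zero_iff.2 tendsto_id)
  refine (Asymptotics.IsBigO.of_bound 1 (Eventually.of_forall fun y => ?_)).trans_isLittleO hsq
  simpa [Real.norm_eq_abs, abs_of_nonneg (sq_nonneg (y - x))] using sq_min_zero_remainder_le x y

noncomputable def phiDerivFst (p q : ℝ) : ℝ := max q (-p)
noncomputable def phiDerivSnd (p q : ℝ) : ℝ := max p (-q)

lemma phiDerivFst_eq (p q : ℝ) : phiDerivFst p q = q - min (p + q) 0 := by
  rw [phiDerivFst, ← max_sub_sub_left, sub_zero, max_comm]
  congr 1; ring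

lemma phiDerivSnd_eq (p q : ℝ) : phiDerivSnd p q = p - min (p + q) 0 := by
  rw [phiDerivSnd, ← max_sub_sub_left, sub_zero, max_comm]
  congr 1; ring

lemma HasFDerivAt.phi {E : Type*} [NormedAddCommGroup E] [NormedSpace ℝ E] {G H : E → ℝ}
    {G' H' : E →L[ℝ] ℝ} {w : E} (hG : HasFDerivAt G G' w) (hH : HasFDerivAt H H' w) :
    HasFDerivAt (fun u => phi (G u) (H u))
      (phiDerivFst (G w) (H w) • G' + phiDerivSnd (G w) (H w) • H') w := by
  simp only [phi_eq_mul_sub]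
  refine ((hG.fun_mul hH).fun_sub ((hasDerivAt_sq_min_zero (G w + H w)).comp_hasFDerivAt w
    (hG.fun_add hH))).congr_fderiv ?_
  rw [phiDerivFst_eq, phiDerivSnd_eq]
  module

section Gradient
variable {E : Type*} [NormedAddCommGroup E] [InnerProductSpace ℝ E] [CompleteSpace E]

lemma gradient_phi_sub_const {G H : E → ℝ} {w : E} (hG : DifferentiableAt ℝ G w)
    (hH : DifferentiableAt ℝ H w) (b : ℝ) :
    gradient (fun u => phi (G u - b) (H u - b)) w =
      phiDerivFst (G w - b) (H w - b) • gradient G w +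
        phiDerivSnd (G w - b) (H w - b) • gradient H w := by
  simp only [gradient, ((hG.hasFDerivAt.sub_const b).phi (hH.hasFDerivAt.sub_const b)).fderiv,
    map_add, map_smul]

lemma ContDiff.continuous_gradient {f : E → ℝ} (hf : ContDiff ℝ 1 f) :
    Continuous (gradient f) :=
  (InnerProductSpace.toDual ℝ E).symm.continuous.comp (hf.continuous_fderiv one_ne_zero)

variable {m l s : ℕ}

noncomputable def mpccLagrangianGradient (f : E → ℝ) (g : Fin m → E → ℝ) (h : Fin l → E → ℝ)
    (G H : Fin s → E → ℝ) (lam : Fin m → ℝ) (xi : Fin l → ℝ) (eta zeta : Fin s → ℝ) (w : E) : E :=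
  gradient f w + ∑ j, lam j • gradient (g j) w + ∑ i, xi i • gradient (h i) w
    - ∑ k, eta k • gradient (G k) w - ∑ k, zeta k • gradient (H k) w

lemma mpccLagrangianGradient_eq_regularized (f : E → ℝ) (g : Fin m → E → ℝ) (h : Fin l → E → ℝ)
    {G H : Fin s → E → ℝ} (lam : Fin m → ℝ) (xi : Fin l → ℝ) (mu nu rho : Fin s → ℝ) (b : ℝ)
    {w : E} (hG : ∀ k, DifferentiableAt ℝ (G k) w) (hH : ∀ k, DifferentiableAt ℝ (H k) w) :
    mpccLagrangianGradient f g h G H lam xi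
        (fun k => mu k - rho k * phiDerivFst (G k w - b) (H k w - b))
        (fun k => nu k - rho k * phiDerivSnd (G k w - b) (H k w - b)) w =
      gradient f w + ∑ j, lam j • gradient (g j) w + ∑ i, xi i • gradient (h i) w
        - ∑ k, mu k • gradient (G k) w - ∑ k, nu k • gradient (H k) w
        + ∑ k, rho k • gradient (fun u => phi (G k u - b) (H k u - b)) w := by
  simp only [mpccLagrangianGradient, fun k => gradient_phi_sub_const (hG k) (hH k) b, sub_smul,
    smul_add, smul_smul, Finset.sum_sub_distrib, Finset.sum_add_distrib]
  abel

lemma tendsto_mpccLagrangianGradient {f : E → ℝ} {g : Fin m → E → ℝ} {h : Fin l → E → ℝ}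
    {G H : Fin s → E → ℝ} (hf : ContDiff ℝ 1 f) (hg : ∀ j, ContDiff ℝ 1 (g j))
    (hh : ∀ i, ContDiff ℝ 1 (h i)) (hG : ∀ k, ContDiff ℝ 1 (G k)) (hH : ∀ k, ContDiff ℝ 1 (H k))
    {α : Type*} {F : Filter α} {lam : α → Fin m → ℝ} {xi : α → Fin l → ℝ}
    {eta zeta : α → Fin s → ℝ} {w : α → E} {lam₀ : Fin m → ℝ} {xi₀ : Fin l → ℝ}
    {eta₀ zeta₀ : Fin s → ℝ} {w₀ : E}
    (hlam : Tendsto lam F (𝓝 lam₀)) (hxi : Tendsto xi F (𝓝 xi₀))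
    (heta : Tendsto eta F (𝓝 eta₀)) (hzeta : Tendsto zeta F (𝓝 zeta₀))
    (hw : Tendsto w F (𝓝 w₀)) :
    Tendsto (fun a => mpccLagrangianGradient f g h G H (lam a) (xi a) (eta a) (zeta a) (w a)) F
      (𝓝 (mpccLagrangianGradient f g h G H lam₀ xi₀ eta₀ zeta₀ w₀)) := by
  have hgrad {u : E → ℝ} (hu : ContDiff ℝ 1 u) :
      Tendsto (fun a => gradient u (w a)) F (𝓝 (gradient u w₀)) :=
    hu.continuous_gradient.continuousAt.tendsto.comp hw
  refine ((((hgrad hf).add ?_).add ?_).sub ?_).sub ?_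
  · exact tendsto_finsetSum _ fun j _ => (tendsto_pi_nhds.1 hlam j).smul (hgrad (hg j))
  · exact tendsto_finsetSum _ fun i _ => (tendsto_pi_nhds.1 hxi i).smul (hgrad (hh i))
  · exact tendsto_finsetSum _ fun k _ => (tendsto_pi_nhds.1 heta k).smul (hgrad (hG k))
  · exact tendsto_finsetSum _ fun k _ => (tendsto_pi_nhds.1 hzeta k).smul (hgrad (hH k))
end Gradient

section Limits
variable {α : Type*} {F : Filter α}

lemma tendsto_phiDeriv_sub {a b β : α → ℝ} {a₀ b₀ : ℝ} (ha : Tendsto a F (𝓝 a₀))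
    (hb : Tendsto b F (𝓝 b₀)) (hβ : Tendsto β F (𝓝 0)) :
    Tendsto (fun t => phiDerivFst (a t - β t) (b t - β t)) F (𝓝 (phiDerivFst a₀ b₀)) ∧
      Tendsto (fun t => phiDerivSnd (a t - β t) (b t - β t)) F (𝓝 (phiDerivSnd a₀ b₀)) := by
  have ha' := ha.sub hβ
  have hb' := hb.sub hβ
  rw [sub_zero] at ha' hb'
  exact ⟨hb'.max ha'.neg, ha'.max hb'.neg⟩

lemma nonneg_and_mul_eq_zero_of_tendsto [F.NeBot] {a c : α → ℝ} {a₀ c₀ : ℝ}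
    (ha : Tendsto a F (𝓝 a₀)) (hc : Tendsto c F (𝓝 c₀)) (h : ∀ t, 0 ≤ a t ∧ a t * c t = 0) :
    0 ≤ a₀ ∧ a₀ * c₀ = 0 :=
  ⟨ge_of_tendsto' ha fun t => (h t).1,
    tendsto_nhds_unique ((ha.mul hc).congr fun t => (h t).2) tendsto_const_nhds⟩

lemma mul_eq_zero_of_tendsto_of_phi_sub_nonpos [F.NeBot] {a b β : α → ℝ} {a₀ b₀ : ℝ}
    (ha : Tendsto a F (𝓝 a₀)) (hb : Tendsto b F (𝓝 b₀)) (hβ : Tendsto β F (𝓝 0))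
    (ha_nonneg : ∀ t, 0 ≤ a t) (hb_nonneg : ∀ t, 0 ≤ b t)
    (hphi : ∀ t, phi (a t - β t) (b t - β t) ≤ 0) : a₀ * b₀ = 0 := by
  have ha₀ : 0 ≤ a₀ := ge_of_tendsto' ha ha_nonneg
  have hb₀ : 0 ≤ b₀ := ge_of_tendsto' hb hb_nonneg
  have hlim : Tendsto (fun t => phi (a t - β t) (b t - β t)) F (𝓝 (phi (a₀ - 0) (b₀ - 0))) :=
    (continuous_phi.tendsto _).comp ((ha.sub hβ).prodMk_nhds (hb.sub hβ))
  rw [sub_zero, sub_zero] at hlim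
  have hphi₀ : phi a₀ b₀ ≤ 0 := le_of_tendsto' hlim hphi
  rw [phi, if_pos (add_nonneg ha₀ hb₀)] at hphi₀
  exact le_antisymm hphi₀ (mul_nonneg ha₀ hb₀)

end Limits

lemma mStationary_sign_conditions {a b μ ν : ℝ} (ρ : ℝ) (ha : 0 ≤ a) (hb : 0 ≤ b)
    (hμ : 0 ≤ μ ∧ μ * a = 0) (hν : 0 ≤ ν ∧ ν * b = 0) :
    (0 < a → b = 0 → μ - ρ * phiDerivFst a b = 0) ∧
    (a = 0 → 0 < b → ν - ρ * phiDerivSnd a b = 0) ∧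
    (a = 0 → b = 0 → (0 < μ - ρ * phiDerivFst a b ∧ 0 < ν - ρ * phiDerivSnd a b) ∨
      (μ - ρ * phiDerivFst a b) * (ν - ρ * phiDerivSnd a b) = 0) := by
  have hFst : b = 0 → μ - ρ * phiDerivFst a b = μ := fun hb₀ => by simp [phiDerivFst, hb₀, ha]
  have hSnd : a = 0 → ν - ρ * phiDerivSnd a b = ν := fun ha₀ => by simp [phiDerivSnd, ha₀, hb]
  refine ⟨fun ha₀ hb₀ => ?_, fun ha₀ hb₀ => ?_, fun ha₀ hb₀ => ?_⟩
  · rw [hFst hb₀]; exact (mul_eq_zero.1 hμ.2).resolve_right ha₀.ne'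
  · rw [hSnd ha₀]; exact (mul_eq_zero.1 hν.2).resolve_right hb₀.ne'
  · rw [hFst hb₀, hSnd ha₀]
    rcases hμ.1.eq_or_lt with hμ₀ | hμ₀
    · exact Or.inr (by rw [← hμ₀, zero_mul])
    rcases hν.1.eq_or_lt with hν₀ | hν₀
    · exact Or.inr (by rw [← hν₀, mul_zero])
    exact Or.inl ⟨hμ₀, hν₀⟩

theorem kkt_limit_is_m_stationary_general {n m l s : ℕ}
    (f : EuclideanSpace ℝ (Fin n) → ℝ)
    (g : Fin m → EuclideanSpace ℝ (Fin n) → ℝ)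
    (h : Fin l → EuclideanSpace ℝ (Fin n) → ℝ)
    (G H : Fin s → EuclideanSpace ℝ (Fin n) → ℝ)
    (hf : ContDiff ℝ 1 f) (hg : ∀ j, ContDiff ℝ 1 (g j))
    (hh : ∀ i, ContDiff ℝ 1 (h i))
    (hG : ∀ k, ContDiff ℝ 1 (G k)) (hH : ∀ k, ContDiff ℝ 1 (H k))
    -- sequence of regularization parameters
    (β : ℕ → ℝ) (hβ_lim : Tendsto β atTop (𝓝 0))
    -- sequence of KKT points of NLP(β_t) with their multipliers
    (wseq : ℕ → EuclideanSpace ℝ (Fin n))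
    (lam : ℕ → Fin m → ℝ) (xi : ℕ → Fin l → ℝ)
    (mu nu rho : ℕ → Fin s → ℝ)
    -- feasibility of w^{β_t} for NLP(β_t)
    (hfeas_g : ∀ t j, g j (wseq t) ≤ 0)
    (hfeas_h : ∀ t i, h i (wseq t) = 0)
    (hfeas_G : ∀ t k, 0 ≤ G k (wseq t))
    (hfeas_H : ∀ t k, 0 ≤ H k (wseq t))
    (hfeas_B : ∀ t k, phi (G k (wseq t) - β t) (H k (wseq t) - β t) ≤ 0)
    -- nonnegativity and complementary slackness of the inequality multipliers
    (hlam : ∀ t j, 0 ≤ lam t j ∧ lam t j * g j (wseq t) = 0)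
    (hmu : ∀ t k, 0 ≤ mu t k ∧ mu t k * G k (wseq t) = 0)
    (hnu : ∀ t k, 0 ≤ nu t k ∧ nu t k * H k (wseq t) = 0)
    -- vanishing of the gradient of the Lagrangian of NLP(β_t)
    (hgrad : ∀ t,
      gradient f (wseq t) + ∑ j, lam t j • gradient (g j) (wseq t)
        + ∑ i, xi t i • gradient (h i) (wseq t)
        - ∑ k, mu t k • gradient (G k) (wseq t)
        - ∑ k, nu t k • gradient (H k) (wseq t)
        + ∑ k, rho t k •
            gradient (fun u => phi (G k u - β t) (H k u - β t)) (wseq t) = 0)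
    -- convergence of the KKT points and of all multipliers
    (wstar : EuclideanSpace ℝ (Fin n))
    (hw_lim : Tendsto wseq atTop (𝓝 wstar))
    (lamstar : Fin m → ℝ) (xistar : Fin l → ℝ) (mustar nustar rhostar : Fin s → ℝ)
    (hlam_lim : Tendsto lam atTop (𝓝 lamstar))
    (hxi_lim : Tendsto xi atTop (𝓝 xistar))
    (hmu_lim : Tendsto mu atTop (𝓝 mustar))
    (hnu_lim : Tendsto nu atTop (𝓝 nustar))
    (hrho_lim : Tendsto rho atTop (𝓝 rhostar)) :
    -- conclusion: w* is an M-stationary point of the MPCC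
    (∀ j, g j wstar ≤ 0) ∧ (∀ i, h i wstar = 0) ∧
    (∀ k, 0 ≤ G k wstar) ∧ (∀ k, 0 ≤ H k wstar) ∧
    (∀ k, G k wstar * H k wstar = 0) ∧
    ∃ (lam' : Fin m → ℝ) (xi' : Fin l → ℝ) (eta zeta : Fin s → ℝ),
      (gradient f wstar + ∑ j, lam' j • gradient (g j) wstar
        + ∑ i, xi' i • gradient (h i) wstar
        - ∑ k, eta k • gradient (G k) wstar
        - ∑ k, zeta k • gradient (H k) wstar = 0) ∧
      (∀ j, 0 ≤ lam' j ∧ lam' j * g j wstar = 0) ∧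
      (∀ k, 0 < G k wstar → H k wstar = 0 → eta k = 0) ∧
      (∀ k, G k wstar = 0 → 0 < H k wstar → zeta k = 0) ∧
      (∀ k, G k wstar = 0 → H k wstar = 0 →
        (0 < eta k ∧ 0 < zeta k) ∨ eta k * zeta k = 0) := by
  have tcomp {u : EuclideanSpace ℝ (Fin n) → ℝ} (hu : ContDiff ℝ 1 u) :
      Tendsto (fun t => u (wseq t)) atTop (𝓝 (u wstar)) :=
    (hu.continuous.tendsto wstar).comp hw_lim
  have tG k := tcomp (hG k)
  have tH k := tcomp (hH k)
  have tmu := tendsto_pi_nhds.1 hmu_lim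
  have tnu := tendsto_pi_nhds.1 hnu_lim
  have trho := tendsto_pi_nhds.1 hrho_lim
  have hstat t :=
    (mpccLagrangianGradient_eq_regularized f g h (lam t) (xi t) (mu t) (nu t) (rho t) (β t)
      (fun k => (hG k).differentiable one_ne_zero _)
      (fun k => (hH k).differentiable one_ne_zero _)).trans (hgrad t)
  have tD k := tendsto_phiDeriv_sub (tG k) (tH k) hβ_lim
  have hlim := tendsto_mpccLagrangianGradient hf hg hh hG hH hlam_lim hxi_lim
    (tendsto_pi_nhds.2 fun k => (tmu k).sub ((trho k).mul (tD k).1))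
    (tendsto_pi_nhds.2 fun k => (tnu k).sub ((trho k).mul (tD k).2)) hw_lim
  have hG₀ k : 0 ≤ G k wstar := ge_of_tendsto' (tG k) (hfeas_G · k)
  have hH₀ k : 0 ≤ H k wstar := ge_of_tendsto' (tH k) (hfeas_H · k)
  have hsign k := mStationary_sign_conditions (rhostar k) (hG₀ k) (hH₀ k)
    (nonneg_and_mul_eq_zero_of_tendsto (tmu k) (tG k) (hmu · k))
    (nonneg_and_mul_eq_zero_of_tendsto (tnu k) (tH k) (hnu · k))
  refine ⟨fun j => le_of_tendsto' (tcomp (hg j)) (hfeas_g · j),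
    fun i => tendsto_nhds_unique ((tcomp (hh i)).congr (hfeas_h · i)) tendsto_const_nhds,
    hG₀, hH₀, fun k => mul_eq_zero_of_tendsto_of_phi_sub_nonpos (tG k) (tH k) hβ_lim
      (hfeas_G · k) (hfeas_H · k) (hfeas_B · k),
    lamstar, xistar, _, _, tendsto_nhds_unique (hlim.congr hstat) tendsto_const_nhds,
    fun j => nonneg_and_mul_eq_zero_of_tendsto (tendsto_pi_nhds.1 hlam_lim j) (tcomp (hg j))
      (hlam · j),
    fun k => (hsign k).1, fun k => (hsign k).2.1, fun k => (hsign k).2.2⟩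

/-- Kanzow–Schwartz convergence theorem: if w^{β_t} are KKT points of the
regularized problems NLP(β_t) whose multipliers converge, β_t → 0,
(w^{β_t}, multipliers) → (w*, multipliers*), and MPCC-LICQ holds at w*,
then w* is an M-stationary point of the MPCC. -/
theorem kkt_limit_is_m_stationary {n m l s : ℕ}
    (f : EuclideanSpace ℝ (Fin n) → ℝ)
    (g : Fin m → EuclideanSpace ℝ (Fin n) → ℝ)
    (h : Fin l → EuclideanSpace ℝ (Fin n) → ℝ)
    (G H : Fin s → EuclideanSpace ℝ (Fin n) → ℝ)
    (hf : ContDiff ℝ 1 f) (hg : ∀ j, ContDiff ℝ 1 (g j))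
    (hh : ∀ i, ContDiff ℝ 1 (h i))
    (hG : ∀ k, ContDiff ℝ 1 (G k)) (hH : ∀ k, ContDiff ℝ 1 (H k))
    -- sequence of regularization parameters
    (β : ℕ → ℝ) (hβ_pos : ∀ t, 0 < β t) (hβ_lim : Tendsto β atTop (𝓝 0))
    -- sequence of KKT points of NLP(β_t) with their multipliers
    (wseq : ℕ → EuclideanSpace ℝ (Fin n))
    (lam : ℕ → Fin m → ℝ) (xi : ℕ → Fin l → ℝ)
    (mu nu rho : ℕ → Fin s → ℝ)
    -- feasibility of w^{β_t} for NLP(β_t)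
    (hfeas_g : ∀ t j, g j (wseq t) ≤ 0)
    (hfeas_h : ∀ t i, h i (wseq t) = 0)
    (hfeas_G : ∀ t k, 0 ≤ G k (wseq t))
    (hfeas_H : ∀ t k, 0 ≤ H k (wseq t))
    (hfeas_B : ∀ t k, phi (G k (wseq t) - β t) (H k (wseq t) - β t) ≤ 0)
    -- nonnegativity and complementary slackness of the inequality multipliers
    (hlam : ∀ t j, 0 ≤ lam t j ∧ lam t j * g j (wseq t) = 0)
    (hmu : ∀ t k, 0 ≤ mu t k ∧ mu t k * G k (wseq t) = 0)
    (hnu : ∀ t k, 0 ≤ nu t k ∧ nu t k * H k (wseq t) = 0)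
    (hrho : ∀ t k, 0 ≤ rho t k ∧
      rho t k * phi (G k (wseq t) - β t) (H k (wseq t) - β t) = 0)
    -- vanishing of the gradient of the Lagrangian of NLP(β_t)
    (hgrad : ∀ t,
      gradient f (wseq t) + ∑ j, lam t j • gradient (g j) (wseq t)
        + ∑ i, xi t i • gradient (h i) (wseq t)
        - ∑ k, mu t k • gradient (G k) (wseq t)
        - ∑ k, nu t k • gradient (H k) (wseq t)
        + ∑ k, rho t k •
            gradient (fun u => phi (G k u - β t) (H k u - β t)) (wseq t) = 0)
    -- convergence of the KKT points and of all multipliers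
    (wstar : EuclideanSpace ℝ (Fin n))
    (hw_lim : Tendsto wseq atTop (𝓝 wstar))
    (lamstar : Fin m → ℝ) (xistar : Fin l → ℝ) (mustar nustar rhostar : Fin s → ℝ)
    (hlam_lim : Tendsto lam atTop (𝓝 lamstar))
    (hxi_lim : Tendsto xi atTop (𝓝 xistar))
    (hmu_lim : Tendsto mu atTop (𝓝 mustar))
    (hnu_lim : Tendsto nu atTop (𝓝 nustar))
    (hrho_lim : Tendsto rho atTop (𝓝 rhostar))
    -- MPCC-LICQ at w*
    (hlicq : LinearIndependent ℝ
      (fun idx : {j : Fin m // g j wstar = 0} ⊕ Fin l ⊕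
          {k : Fin s // G k wstar = 0 ∧ (0 < H k wstar ∨ H k wstar = 0)} ⊕
          {k : Fin s // H k wstar = 0 ∧ (0 < G k wstar ∨ G k wstar = 0)} =>
        match idx with
        | Sum.inl j => gradient (g j.1) wstar
        | Sum.inr (Sum.inl i) => gradient (h i) wstar
        | Sum.inr (Sum.inr (Sum.inl k)) => gradient (G k.1) wstar
        | Sum.inr (Sum.inr (Sum.inr k)) => gradient (H k.1) wstar)) :
    -- conclusion: w* is an M-stationary point of the MPCC
    (∀ j, g j wstar ≤ 0) ∧ (∀ i, h i wstar = 0) ∧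
    (∀ k, 0 ≤ G k wstar) ∧ (∀ k, 0 ≤ H k wstar) ∧
    (∀ k, G k wstar * H k wstar = 0) ∧
    ∃ (lam' : Fin m → ℝ) (xi' : Fin l → ℝ) (eta zeta : Fin s → ℝ),
      (gradient f wstar + ∑ j, lam' j • gradient (g j) wstar
        + ∑ i, xi' i • gradient (h i) wstar
        - ∑ k, eta k • gradient (G k) wstar
        - ∑ k, zeta k • gradient (H k) wstar = 0) ∧
      (∀ j, 0 ≤ lam' j ∧ lam' j * g j wstar = 0) ∧
      (∀ k, 0 < G k wstar → H k wstar = 0 → eta k = 0) ∧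
      (∀ k, G k wstar = 0 → 0 < H k wstar → zeta k = 0) ∧
      (∀ k, G k wstar = 0 → H k wstar = 0 →
        (0 < eta k ∧ 0 < zeta k) ∨ eta k * zeta k = 0) :=
  kkt_limit_is_m_stationary_general f g h G H hf hg hh hG hH β hβ_lim wseq lam xi mu nu rho hfeas_g
    hfeas_h hfeas_G hfeas_H hfeas_B hlam hmu hnu hgrad wstar hw_lim lamstar xistar mustar nustar
    rhostar hlam_lim hxi_lim hmu_lim hnu_lim hrho_lim
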